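/- For all complex numbers z with |z| ≤ 1, Σ_{m=0}^{∞} e_{S,m} z^m = Π_p (1 + (z−1)/p²), the product running over all primes p. -/

import Mathlib

open scoped BigOperators

/-- A positive integer is *powerful* if every prime dividing it divides it with
multiplicity at least `2`. -/
def Powerful (f : ℕ) : Prop := 0 < f ∧ ∀ p : ℕ, p.Prime → p ∣ f → p ^ 2 ∣ f

/-- `ω_S(n)`: the number of primes dividing `n` with multiplicity at least `2`. -/
def omegaS (n : ℕ) : ℕ := (n.primeFactors.filter fun p => 2 ≤ n.factorization p).card

/-- The density `e_{S,m}` of integers `n` with `ω_S(n) = m`. -/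
noncomputable def eSm (m : ℕ) : ℝ :=
  6 / Real.pi ^ 2 *
    ∑' f : {f : ℕ // Powerful f ∧ omegaS f = m},
      ((f : ℕ) : ℝ)⁻¹ * ∏ p ∈ (f : ℕ).primeFactors, (1 + 1 / (p : ℝ))⁻¹

/-!
For `‖z‖ ≤ 1` the function `n ↦ [n powerful] z ^ ω_S(n) n⁻¹ ∏_{p ∣ n} (1 + 1/p)⁻¹` is
multiplicative and absolutely summable, since every powerful number is of the form `a²b³`.
Its Euler factor at `p` is a geometric series summing to `1 + z/(p² - 1)`, and multiplying by
`6/π² = ∏_p (1 - p⁻²)` turns it into `1 + (z - 1)/p²`. Grouping the same series by the value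
of `ω_S` gives `∑ₘ e_{S,m} zᵐ`.
-/

namespace Powerful

lemma one : Powerful 1 :=
  ⟨one_pos, fun _ hp hd => absurd (Nat.eq_one_of_dvd_one hd) hp.ne_one⟩

lemma prime_pow {p e : ℕ} (hp : p.Prime) (he : 2 ≤ e) : Powerful (p ^ e) := by
  refine ⟨Nat.pow_pos hp.pos, fun q hq hd => ?_⟩
  rw [(Nat.prime_dvd_prime_iff_eq hq hp).mp (hq.dvd_of_dvd_pow hd)]
  exact pow_dvd_pow p he

lemma not_prime {p : ℕ} (hp : p.Prime) : ¬ Powerful p := fun h => by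
  have := Nat.le_of_dvd hp.pos (h.2 p hp dvd_rfl)
  nlinarith [hp.two_le]

lemma mul {m n : ℕ} (hm : Powerful m) (hn : Powerful n) : Powerful (m * n) := by
  refine ⟨Nat.mul_pos hm.1 hn.1, fun p hp hd => ?_⟩
  rcases hp.dvd_mul.mp hd with h | h
  · exact dvd_mul_of_dvd_left (hm.2 p hp h) n
  · exact dvd_mul_of_dvd_right (hn.2 p hp h) m

lemma of_mul_left {m n : ℕ} (h : m.Coprime n) (hmn : Powerful (m * n)) : Powerful m := by
  refine ⟨Nat.pos_of_mul_pos_right hmn.1, fun p hp hd => ?_⟩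
  exact ((h.coprime_dvd_left hd).pow_left 2).dvd_of_dvd_mul_right (hmn.2 p hp (hd.mul_right n))

lemma of_mul_right {m n : ℕ} (h : m.Coprime n) (hmn : Powerful (m * n)) : Powerful n :=
  of_mul_left h.symm (by rwa [mul_comm])

lemma mul_iff {m n : ℕ} (h : m.Coprime n) : Powerful (m * n) ↔ Powerful m ∧ Powerful n :=
  ⟨fun hmn => ⟨of_mul_left h hmn, of_mul_right h hmn⟩, fun hmn => hmn.1.mul hmn.2⟩

/-- Writing `f = b² a` with `a` squarefree, every prime of `a` must divide `b`, so `a ∣ b`. -/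
lemma exists_eq_sq_mul_cube {f : ℕ} (hf : Powerful f) : ∃ a b : ℕ, f = a ^ 2 * b ^ 3 := by
  obtain ⟨a, b, -, -, rfl, ha⟩ := Nat.sq_mul_squarefree_of_pos hf.1
  have hab : a ∣ b := by
    rw [← Nat.prod_primeFactors_of_squarefree ha]
    refine Finset.prod_primes_dvd b (fun p hp => (Nat.prime_of_mem_primeFactors hp).prime)
      fun p hp => ?_
    have hpa := Nat.dvd_of_mem_primeFactors hp
    have hp := Nat.prime_of_mem_primeFactors hp
    by_contra hpb
    have hcop : (p ^ 2).Coprime (b ^ 2) := Nat.Coprime.pow 2 2 (hp.coprime_iff_not_dvd.mpr hpb)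
    have hp2 : p * p ∣ a := by
      simpa [sq] using hcop.dvd_of_dvd_mul_left (hf.2 p hp (hpa.mul_left _))
    exact Nat.squarefree_iff_prime_squarefree.mp ha p hp hp2
  obtain ⟨c, rfl⟩ := hab
  exact ⟨c, a, by ring⟩

end Powerful

lemma summable_inv_powerful : Summable fun n : {n : ℕ // Powerful n} => ((n : ℕ) : ℝ)⁻¹ := by
  choose a b hab using fun n : {n : ℕ // Powerful n} => n.2.exists_eq_sq_mul_cube
  have hinj : Function.Injective fun n => (a n, b n) := fun m n h => by
    simp only [Prod.mk.injEq] at h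
    exact Subtype.ext (by rw [hab, hab, h.1, h.2])
  have h23 : Summable fun x : ℕ × ℕ => ((x.1 : ℝ) ^ 2)⁻¹ * ((x.2 : ℝ) ^ 3)⁻¹ :=
    (Real.summable_nat_pow_inv.mpr one_lt_two).mul_of_nonneg
      (Real.summable_nat_pow_inv.mpr (by norm_num)) (fun _ => by positivity)
      (fun _ => by positivity)
  refine (h23.comp_injective hinj).congr fun n => ?_
  simp [hab n, mul_comm]

lemma omegaS_one : omegaS 1 = 0 := by simp [omegaS]

lemma omegaS_prime_pow {p e : ℕ} (hp : p.Prime) (he : 2 ≤ e) : omegaS (p ^ e) = 1 := by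
  simp [omegaS, Nat.primeFactors_pow _ (by omega : e ≠ 0), hp.primeFactors, hp.factorization_pow,
    Finset.filter_singleton, he]

lemma omegaS_mul {m n : ℕ} (h : m.Coprime n) : omegaS (m * n) = omegaS m + omegaS n := by
  have key : ∀ {a b : ℕ}, a.Coprime b → ∀ p ∈ a.primeFactors,
      (a * b).factorization p = a.factorization p := by
    intro a b hab p hp
    have hpb : ¬ p ∣ b := fun hpb => (Nat.prime_of_mem_primeFactors hp).one_lt.ne'
      (Nat.eq_one_of_dvd_coprimes hab (Nat.dvd_of_mem_primeFactors hp) hpb)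
    rw [Nat.factorization_mul_apply_of_coprime hab, Nat.factorization_eq_zero_of_not_dvd hpb,
      add_zero]
  have hm : {p ∈ m.primeFactors | 2 ≤ (m * n).factorization p} =
      {p ∈ m.primeFactors | 2 ≤ m.factorization p} :=
    Finset.filter_congr fun p hp => by rw [key h p hp]
  have hn : {p ∈ n.primeFactors | 2 ≤ (m * n).factorization p} =
      {p ∈ n.primeFactors | 2 ≤ n.factorization p} :=
    Finset.filter_congr fun p hp => by rw [mul_comm, key h.symm p hp]
  rw [omegaS, h.primeFactors_mul, Finset.filter_union, hm, hn, Finset.card_union_of_disjoint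
    (Finset.disjoint_filter_filter h.disjoint_primeFactors), omegaS, omegaS]

noncomputable def eSmSummand (n : ℕ) : ℝ :=
  (n : ℝ)⁻¹ * ∏ p ∈ n.primeFactors, (1 + 1 / (p : ℝ))⁻¹

lemma eSmSummand_nonneg (n : ℕ) : 0 ≤ eSmSummand n := by
  unfold eSmSummand
  positivity

lemma eSmSummand_le_inv (n : ℕ) : eSmSummand n ≤ (n : ℝ)⁻¹ := by
  refine mul_le_of_le_one_right (by positivity) (Finset.prod_le_one (fun _ _ => by positivity)
    fun p _ => inv_le_one_of_one_le₀ ?_)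
  simp only [le_add_iff_nonneg_right, one_div, inv_nonneg, Nat.cast_nonneg]

lemma eSmSummand_mul {m n : ℕ} (h : m.Coprime n) :
    eSmSummand (m * n) = eSmSummand m * eSmSummand n := by
  rw [eSmSummand, eSmSummand, eSmSummand, h.primeFactors_mul,
    Finset.prod_union h.disjoint_primeFactors, Nat.cast_mul, mul_inv]
  ring

lemma eSmSummand_prime_pow_add_two {p : ℕ} (hp : p.Prime) (e : ℕ) :
    eSmSummand (p ^ (e + 2)) = ((p : ℝ) * (p + 1))⁻¹ * (p : ℝ)⁻¹ ^ e := by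
  have hp0 : (p : ℝ) ≠ 0 := by exact_mod_cast hp.ne_zero
  rw [eSmSummand, Nat.primeFactors_pow _ (by omega), hp.primeFactors, Finset.prod_singleton]
  push_cast
  simp only [inv_pow]
  field_simp
  ring

lemma hasSum_eSmSummand_prime_pow_add_two {p : ℕ} (hp : p.Prime) :
    HasSum (fun e => eSmSummand (p ^ (e + 2))) ((p : ℝ) ^ 2 - 1)⁻¹ := by
  have hp1 : (1 : ℝ) < p := by exact_mod_cast hp.one_lt
  have hsum := (hasSum_geometric_of_lt_one (by positivity) (inv_lt_one_of_one_lt₀ hp1)).mul_left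
    ((p : ℝ) * (p + 1))⁻¹
  rw [show ((p : ℝ) * (p + 1))⁻¹ * (1 - (p : ℝ)⁻¹)⁻¹ = ((p : ℝ) ^ 2 - 1)⁻¹ by
    have : (p : ℝ) - 1 ≠ 0 := by linarith
    have : (p : ℝ) ^ 2 - 1 ≠ 0 := by nlinarith
    field_simp
    ring] at hsum
  simpa only [eSmSummand_prime_pow_add_two hp] using hsum

noncomputable def powerfulTerm (z : ℂ) : ℕ → ℂ :=
  {n | Powerful n}.indicator fun n => z ^ omegaS n * eSmSummand n

lemma powerfulTerm_of_powerful (z : ℂ) {n : ℕ} (hn : Powerful n) :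
    powerfulTerm z n = z ^ omegaS n * eSmSummand n :=
  Set.indicator_of_mem (s := {n | Powerful n}) hn _

lemma powerfulTerm_of_not_powerful (z : ℂ) {n : ℕ} (hn : ¬ Powerful n) : powerfulTerm z n = 0 :=
  Set.indicator_of_notMem (s := {n | Powerful n}) hn _

lemma powerfulTerm_one (z : ℂ) : powerfulTerm z 1 = 1 := by
  simp [powerfulTerm_of_powerful z Powerful.one, omegaS_one, eSmSummand]

lemma powerfulTerm_prime_pow_add_two (z : ℂ) {p : ℕ} (hp : p.Prime) (e : ℕ) :
    powerfulTerm z (p ^ (e + 2)) = z * eSmSummand (p ^ (e + 2)) := by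
  rw [powerfulTerm_of_powerful z (Powerful.prime_pow hp (by omega)),
    omegaS_prime_pow hp (by omega), pow_one]

lemma powerfulTerm_mul (z : ℂ) {m n : ℕ} (h : m.Coprime n) :
    powerfulTerm z (m * n) = powerfulTerm z m * powerfulTerm z n := by
  by_cases hmn : Powerful m ∧ Powerful n
  · rw [powerfulTerm_of_powerful z (hmn.1.mul hmn.2), powerfulTerm_of_powerful z hmn.1,
      powerfulTerm_of_powerful z hmn.2, omegaS_mul h, eSmSummand_mul h]
    push_cast
    ring
  · rw [powerfulTerm_of_not_powerful z (mt (Powerful.mul_iff h).mp hmn)]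
    rcases not_and_or.mp hmn with hm | hn
    · rw [powerfulTerm_of_not_powerful z hm, zero_mul]
    · rw [powerfulTerm_of_not_powerful z hn, mul_zero]

lemma norm_powerfulTerm_le {z : ℂ} (hz : ‖z‖ ≤ 1) (n : ℕ) :
    ‖powerfulTerm z n‖ ≤ {n | Powerful n}.indicator (fun n : ℕ => (n : ℝ)⁻¹) n := by
  by_cases hn : Powerful n
  · rw [powerfulTerm_of_powerful z hn, Set.indicator_of_mem (s := {n | Powerful n}) hn, norm_mul,
      norm_pow, Complex.norm_real, Real.norm_of_nonneg (eSmSummand_nonneg n)]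
    exact (mul_le_of_le_one_left (eSmSummand_nonneg n) (pow_le_one₀ (norm_nonneg z) hz)).trans
      (eSmSummand_le_inv n)
  · rw [powerfulTerm_of_not_powerful z hn, Set.indicator_of_notMem (s := {n | Powerful n}) hn,
      norm_zero]

lemma summable_norm_powerfulTerm {z : ℂ} (hz : ‖z‖ ≤ 1) : Summable fun n => ‖powerfulTerm z n‖ :=
  (summable_subtype_iff_indicator.mp summable_inv_powerful).of_nonneg_of_le
    (fun _ => norm_nonneg _) (norm_powerfulTerm_le hz)

lemma hasSum_powerfulTerm_prime_pow (z : ℂ) {p : ℕ} (hp : p.Prime) :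
    HasSum (fun e => powerfulTerm z (p ^ e)) (1 + z / ((p : ℂ) ^ 2 - 1)) := by
  have htail : HasSum (fun e => powerfulTerm z (p ^ (e + 2))) (z / ((p : ℂ) ^ 2 - 1)) := by
    have h := (Complex.hasSum_ofReal.mpr (hasSum_eSmSummand_prime_pow_add_two hp)).mul_left z
    push_cast at h
    simpa only [powerfulTerm_prime_pow_add_two z hp, div_eq_mul_inv] using h
  rw [← hasSum_nat_add_iff' 2]
  simpa [Finset.sum_range_succ, powerfulTerm_one, powerfulTerm_of_not_powerful z
    (Powerful.not_prime hp)] using htail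

lemma hasProd_one_add_div_sq_sub_one {z : ℂ} (hz : ‖z‖ ≤ 1) :
    HasProd (fun p : Nat.Primes => 1 + z / (((p : ℕ) : ℂ) ^ 2 - 1)) (∑' n, powerfulTerm z n) := by
  have h := EulerProduct.eulerProduct_hasProd (powerfulTerm_one z) (powerfulTerm_mul z)
    (summable_norm_powerfulTerm hz)
    (powerfulTerm_of_not_powerful z fun h => h.1.false)
  simpa only [fun p : Nat.Primes => (hasSum_powerfulTerm_prime_pow z p.2).tsum_eq] using h

lemma hasProd_one_sub_inv_sq :
    HasProd (fun p : Nat.Primes => 1 - (((p : ℕ) : ℂ) ^ 2)⁻¹) (6 / (Real.pi : ℂ) ^ 2) := by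
  have h := (riemannZeta_eulerProduct_hasProd (s := 2) (by norm_num)).inv₀
    (riemannZeta_ne_zero_of_one_lt_re (by norm_num))
  simpa [riemannZeta_two, Complex.cpow_neg] using h

def powerfulSigmaEquiv :
    (Σ m : ℕ, {f : ℕ // Powerful f ∧ omegaS f = m}) ≃ {f : ℕ // Powerful f} where
  toFun x := ⟨x.2, x.2.2.1⟩
  invFun f := ⟨omegaS f, f, f.2, rfl⟩
  left_inv := by rintro ⟨m, f, hf, rfl⟩; rfl
  right_inv _ := rfl

lemma hasSum_eSm_mul_pow {z : ℂ} (hz : ‖z‖ ≤ 1) :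
    HasSum (fun m => (eSm m : ℂ) * z ^ m) (6 / (Real.pi : ℂ) ^ 2 * ∑' n, powerfulTerm z n) := by
  have hpowerful : HasSum (fun f : {f : ℕ // Powerful f} => z ^ omegaS f * eSmSummand f)
      (∑' n, powerfulTerm z n) :=
    hasSum_subtype_iff_indicator.mpr (summable_norm_powerfulTerm hz).of_norm.hasSum
  have hfiber (m : ℕ) : HasSum (fun f : {f : ℕ // Powerful f ∧ omegaS f = m} =>
      z ^ omegaS f * eSmSummand f)
      (z ^ m * ∑' f : {f : ℕ // Powerful f ∧ omegaS f = m}, eSmSummand f) := by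
    have hsum : Summable fun f : {f : ℕ // Powerful f ∧ omegaS f = m} => eSmSummand f :=
      (summable_inv_powerful.comp_injective (Subtype.map_injective (fun _ h => h.1)
        Function.injective_id)).of_nonneg_of_le (fun _ => eSmSummand_nonneg _)
        fun _ => eSmSummand_le_inv _
    have h := (Complex.hasSum_ofReal.mpr hsum.hasSum).mul_left (z ^ m)
    exact h.congr_fun fun f => by rw [f.2.2]
  have h := ((powerfulSigmaEquiv.hasSum_iff.mpr hpowerful).sigma hfiber).mul_left
    (6 / (Real.pi : ℂ) ^ 2)
  refine h.congr_fun fun m => ?_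
  rw [eSm]
  unfold eSmSummand
  push_cast
  ring

lemma one_sub_inv_sq_mul_one_add_div {K : Type*} [Field K] {x : K} (hx : x ≠ 0)
    (hx1 : x ^ 2 - 1 ≠ 0) (z : K) :
    (1 - (x ^ 2)⁻¹) * (1 + z / (x ^ 2 - 1)) = 1 + (z - 1) / x ^ 2 := by
  field_simp
  ring

theorem eSm_generating_function (z : ℂ) (hz : ‖z‖ ≤ 1) :
    ∃ P : ℂ,
      HasProd (fun p : Nat.Primes => 1 + (z - 1) / ((p : ℕ) : ℂ) ^ 2) P ∧
      HasSum (fun m : ℕ => (eSm m : ℂ) * z ^ m) P := by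
  refine ⟨_, (hasProd_one_sub_inv_sq.mul (hasProd_one_add_div_sq_sub_one hz)).congr_fun
    fun p => ?_, hasSum_eSm_mul_pow hz⟩
  have hp1 : ((p : ℕ) : ℂ) ^ 2 - 1 ≠ 0 :=
    sub_ne_zero.mpr (by exact_mod_cast (Nat.one_lt_pow two_ne_zero p.2.one_lt).ne')
  exact (one_sub_inv_sq_mul_one_add_div (by exact_mod_cast p.2.ne_zero) hp1 z).symm
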